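/- arXiv:2604.04053 — 3 statements merged into one kernel-verified Lean document; each statement's English description precedes it below -/
import Mathlib

section
/- Let T_b f(x) := f'(x) + b·(f(x) − f(−x))/x for f in the Schwartz space S(ℝ). Then T_b maps S(ℝ) into S(ℝ). -/
open MeasureTheory intervalIntegral Metric SchwartzMap

namespace Stmt4Aux

/-- `R F m j x = ∫₀¹ tᵐ F⁽ʲ⁾(xt) dt`. -/
noncomputable def R (F : SchwartzMap ℝ ℝ) (m j : ℕ) (x : ℝ) : ℝ :=
  ∫ t in (0:ℝ)..1, t ^ m * iteratedDeriv j F (x * t)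

lemma contF (F : SchwartzMap ℝ ℝ) (j : ℕ) : Continuous (iteratedDeriv j F) :=
  (F.smooth ⊤).continuous_iteratedDeriv j (by exact_mod_cast le_top)

lemma boundF (F : SchwartzMap ℝ ℝ) (j : ℕ) (y : ℝ) :
    ‖iteratedDeriv j F y‖ ≤ SchwartzMap.seminorm ℝ 0 j F := by
  have := SchwartzMap.le_seminorm' ℝ 0 j F y
  simpa using this

lemma contInt (F : SchwartzMap ℝ ℝ) (m j : ℕ) (x : ℝ) :
    Continuous fun t : ℝ => t ^ m * iteratedDeriv j F (x * t) :=
  (continuous_pow m).mul ((contF F j).comp (continuous_const.mul continuous_id))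

/-- Integration by parts identity. -/
lemma xR (F : SchwartzMap ℝ ℝ) (m j : ℕ) (x : ℝ) :
    x * R F m (j + 1) x
      = iteratedDeriv j F x - (0:ℝ) ^ m * iteratedDeriv j F 0
        - (m : ℝ) * R F (m - 1) j x := by
  have hu : ∀ t ∈ Set.uIcc (0:ℝ) 1, HasDerivAt (fun s : ℝ => s ^ m)
      ((m : ℝ) * t ^ (m - 1)) t := fun t _ => hasDerivAt_pow m t
  have hv : ∀ t ∈ Set.uIcc (0:ℝ) 1, HasDerivAt (fun s : ℝ => iteratedDeriv j F (x * s))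
      (x * iteratedDeriv (j + 1) F (x * t)) t := by
    intro t _
    have h1 : HasDerivAt (fun s : ℝ => x * s) x t := by
      simpa using (hasDerivAt_id t).const_mul x
    have h2 : HasDerivAt (iteratedDeriv j F) (iteratedDeriv (j + 1) F (x * t)) (x * t) := by
      rw [iteratedDeriv_succ]
      exact (((F.smooth ⊤).differentiable_iteratedDeriv j
        (by exact_mod_cast ENat.coe_lt_top j)) (x * t)).hasDerivAt
    exact (h2.comp t h1).congr_deriv (by ring)
  have hiu : IntervalIntegrable (fun t : ℝ => (m : ℝ) * t ^ (m - 1)) volume 0 1 :=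
    (continuous_const.mul (continuous_pow _)).intervalIntegrable _ _
  have hiv : IntervalIntegrable (fun t : ℝ => x * iteratedDeriv (j + 1) F (x * t)) volume 0 1 :=
    (continuous_const.mul ((contF F (j+1)).comp
      (continuous_const.mul continuous_id))).intervalIntegrable _ _
  have key := intervalIntegral.integral_mul_deriv_eq_deriv_mul hu hv hiu hiv
  have lhs : (∫ t in (0:ℝ)..1, t ^ m * (x * iteratedDeriv (j + 1) F (x * t)))
      = x * R F m (j + 1) x := by
    rw [R, ← intervalIntegral.integral_const_mul]
    congr 1; funext t; ring
  have rhs : (∫ t in (0:ℝ)..1, ((m : ℝ) * t ^ (m - 1)) * iteratedDeriv j F (x * t))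
      = (m : ℝ) * R F (m - 1) j x := by
    rw [R, ← intervalIntegral.integral_const_mul]
    congr 1; funext t; ring
  rw [lhs, rhs] at key
  rw [key]
  simp only [one_pow, mul_zero]
  ring

lemma xR0 (F : SchwartzMap ℝ ℝ) (x : ℝ) :
    x * R F 0 1 x = F x - F 0 := by
  have := xR F 0 0 x
  simpa [iteratedDeriv_zero] using this

lemma xRsucc (F : SchwartzMap ℝ ℝ) (n : ℕ) (x : ℝ) :
    x * R F (n + 1) (n + 2) x
      = iteratedDeriv (n + 1) F x - ((n : ℝ) + 1) * R F n (n + 1) x := by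
  have := xR F (n + 1) (n + 1) x
  simpa [pow_succ] using this

/-- Differentiation under the integral sign. -/
lemma hasDerivAt_R (F : SchwartzMap ℝ ℝ) (n : ℕ) (x : ℝ) :
    HasDerivAt (R F n (n + 1)) (R F (n + 1) (n + 2) x) x := by
  have hmeas : ∀ᶠ y in nhds x, AEStronglyMeasurable
      (fun t : ℝ => t ^ n * iteratedDeriv (n + 1) F (y * t))
      (volume.restrict (Set.uIoc (0:ℝ) 1)) :=
    Filter.Eventually.of_forall fun y => (contInt F n (n+1) y).aestronglyMeasurable
  have hint : IntervalIntegrable (fun t : ℝ => t ^ n * iteratedDeriv (n + 1) F (x * t))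
      volume 0 1 := (contInt F n (n+1) x).intervalIntegrable _ _
  have h'meas : AEStronglyMeasurable
      (fun t : ℝ => t ^ (n + 1) * iteratedDeriv (n + 2) F (x * t))
      (volume.restrict (Set.uIoc (0:ℝ) 1)) :=
    (contInt F (n+1) (n+2) x).aestronglyMeasurable
  have h_bound : ∀ᵐ t ∂volume, t ∈ Set.uIoc (0:ℝ) 1 → ∀ y ∈ ball x 1,
      ‖t ^ (n + 1) * iteratedDeriv (n + 2) F (y * t)‖
        ≤ (SchwartzMap.seminorm ℝ 0 (n + 2) F : ℝ) := by
    refine Filter.Eventually.of_forall fun t ht y _ => ?_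
    rw [Set.uIoc_of_le (by norm_num : (0:ℝ) ≤ 1)] at ht
    have h1 : |t ^ (n + 1)| ≤ 1 := by
      rw [abs_pow]
      exact pow_le_one₀ (abs_nonneg t) (abs_le.2 ⟨by linarith [ht.1], ht.2⟩)
    calc ‖t ^ (n + 1) * iteratedDeriv (n + 2) F (y * t)‖
        = |t ^ (n + 1)| * ‖iteratedDeriv (n + 2) F (y * t)‖ := by
          rw [norm_mul, Real.norm_eq_abs]
      _ ≤ 1 * (SchwartzMap.seminorm ℝ 0 (n + 2) F : ℝ) :=
          mul_le_mul h1 (boundF F (n+2) _) (norm_nonneg _) zero_le_one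
      _ = _ := one_mul _
  have h_diff : ∀ᵐ t ∂volume, t ∈ Set.uIoc (0:ℝ) 1 → ∀ y ∈ ball x 1,
      HasDerivAt (fun z : ℝ => t ^ n * iteratedDeriv (n + 1) F (z * t))
        (t ^ (n + 1) * iteratedDeriv (n + 2) F (y * t)) y := by
    refine Filter.Eventually.of_forall fun t _ y _ => ?_
    have h1 : HasDerivAt (fun z : ℝ => z * t) t y := by
      simpa using (hasDerivAt_id y).mul_const t
    have h2 : HasDerivAt (iteratedDeriv (n + 1) F)
        (iteratedDeriv (n + 2) F (y * t)) (y * t) := by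
      have := (((F.smooth ⊤).differentiable_iteratedDeriv (n+1)
        (by exact_mod_cast ENat.coe_lt_top (n+1))) (y * t)).hasDerivAt
      rwa [← iteratedDeriv_succ] at this
    have h3 := (h2.comp y h1).const_mul ((t:ℝ) ^ n)
    exact h3.congr_deriv (by ring)
  have := intervalIntegral.hasDerivAt_integral_of_dominated_loc_of_deriv_le
    (μ := volume) (F := fun y t => t ^ n * iteratedDeriv (n + 1) F (y * t))
    (F' := fun y t => t ^ (n + 1) * iteratedDeriv (n + 2) F (y * t))
    (bound := fun _ => (SchwartzMap.seminorm ℝ 0 (n + 2) F : ℝ))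
    (ball_mem_nhds x one_pos) hmeas hint h'meas h_bound (intervalIntegrable_const) h_diff
  exact this.2

lemma iteratedDeriv_R (F : SchwartzMap ℝ ℝ) (n : ℕ) :
    iteratedDeriv n (R F 0 1) = R F n (n + 1) := by
  induction n with
  | zero => simp [iteratedDeriv_zero]
  | succ k ih =>
      rw [iteratedDeriv_succ, ih]
      funext x
      exact (hasDerivAt_R F k x).deriv ▸ rfl

lemma smooth_R (F : SchwartzMap ℝ ℝ) : ContDiff ℝ ((⊤:ℕ∞) : WithTop ℕ∞) (R F 0 1) := by
  apply contDiff_of_differentiable_iteratedDeriv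
  intro m _
  rw [iteratedDeriv_R]
  exact fun x => (hasDerivAt_R F m x).differentiableAt

lemma decay_R (F : SchwartzMap ℝ ℝ) (hF0 : F 0 = 0) (k : ℕ) :
    ∀ n, ∃ C : ℝ, ∀ x : ℝ, |x| ^ k * ‖R F n (n + 1) x‖ ≤ C := by
  induction k with
  | zero =>
      intro n
      refine ⟨SchwartzMap.seminorm ℝ 0 (n + 1) F, fun x => ?_⟩
      rw [pow_zero, one_mul]
      have : ∀ t ∈ Set.uIoc (0:ℝ) 1,
          ‖t ^ n * iteratedDeriv (n + 1) F (x * t)‖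
            ≤ (SchwartzMap.seminorm ℝ 0 (n + 1) F : ℝ) := by
        intro t ht
        rw [Set.uIoc_of_le (by norm_num : (0:ℝ) ≤ 1)] at ht
        have h1 : |t ^ n| ≤ 1 := by
          rw [abs_pow]
          exact pow_le_one₀ (abs_nonneg t) (abs_le.2 ⟨by linarith [ht.1], ht.2⟩)
        calc ‖t ^ n * iteratedDeriv (n + 1) F (x * t)‖
            = |t ^ n| * ‖iteratedDeriv (n + 1) F (x * t)‖ := by
              rw [norm_mul, Real.norm_eq_abs]
          _ ≤ 1 * (SchwartzMap.seminorm ℝ 0 (n + 1) F : ℝ) :=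
              mul_le_mul h1 (boundF F (n+1) _) (norm_nonneg _) zero_le_one
          _ = _ := one_mul _
      have := intervalIntegral.norm_integral_le_of_norm_le_const this
      simpa [R] using this
  | succ k ih =>
      intro n
      match n with
      | 0 =>
          refine ⟨SchwartzMap.seminorm ℝ k 0 F, fun x => ?_⟩
          have hx : |x| ^ (k+1) * ‖R F 0 1 x‖ = |x| ^ k * ‖x * R F 0 1 x‖ := by
            simp only [Real.norm_eq_abs, abs_mul, pow_succ]
            ring
          rw [hx, xR0 F x, hF0, sub_zero]
          have := SchwartzMap.le_seminorm' ℝ k 0 F x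
          simpa using this
      | m + 1 =>
          obtain ⟨C, hC⟩ := ih m
          refine ⟨SchwartzMap.seminorm ℝ k (m+1) F + ((m:ℝ)+1) * C, fun x => ?_⟩
          have hx : |x| ^ (k+1) * ‖R F (m+1) (m+2) x‖
              = |x| ^ k * ‖x * R F (m+1) (m+2) x‖ := by
            simp only [Real.norm_eq_abs, abs_mul, pow_succ]
            ring
          rw [hx, xRsucc F m x]
          have hCx := hC x
          have hnonneg : (0:ℝ) ≤ |x| ^ k := by positivity
          have h1 : |x| ^ k * ‖iteratedDeriv (m+1) F x - ((m:ℝ)+1) * R F m (m+1) x‖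
              ≤ |x| ^ k * ‖iteratedDeriv (m+1) F x‖
                + ((m:ℝ)+1) * (|x| ^ k * ‖R F m (m+1) x‖) := by
            have := norm_sub_le (iteratedDeriv (m+1) F x) (((m:ℝ)+1) * R F m (m+1) x)
            have h2 : ‖((m:ℝ)+1) * R F m (m+1) x‖ = ((m:ℝ)+1) * ‖R F m (m+1) x‖ := by
              rw [norm_mul, Real.norm_eq_abs, abs_of_nonneg (by positivity)]
            nlinarith [norm_nonneg (R F m (m+1) x), norm_nonneg (iteratedDeriv (m+1) F x)]
          have h3 := SchwartzMap.le_seminorm' ℝ k (m+1) F x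
          have hm1 : (0:ℝ) ≤ (m:ℝ)+1 := by positivity
          nlinarith [mul_le_mul_of_nonneg_left hCx hm1]

/-- The difference quotient as a Schwartz map. -/
noncomputable def qS (F : SchwartzMap ℝ ℝ) (hF0 : F 0 = 0) : SchwartzMap ℝ ℝ where
  toFun := R F 0 1
  smooth' := smooth_R F
  decay' := by
    intro k n
    obtain ⟨C, hC⟩ := decay_R F hF0 k n
    refine ⟨C, fun x => ?_⟩
    rw [norm_iteratedFDeriv_eq_norm_iteratedDeriv, iteratedDeriv_R, Real.norm_eq_abs]
    exact hC x

lemma qS_eq (F : SchwartzMap ℝ ℝ) (hF0 : F 0 = 0) {x : ℝ} (hx : x ≠ 0) :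
    qS F hF0 x = F x / x := by
  have h := xR0 F x
  rw [hF0, sub_zero] at h
  have : (qS F hF0) x = R F 0 1 x := rfl
  rw [this]
  field_simp [← h]
  linear_combination h

end Stmt4Aux

open Stmt4Aux
theorem stmt4 (b : ℝ) (f : SchwartzMap ℝ ℝ) :
    ∃ g : SchwartzMap ℝ ℝ, ∀ x : ℝ, x ≠ 0 →
      g x = deriv f x + b * (f x - f (-x)) / x := by
  set F : SchwartzMap ℝ ℝ :=
    f - SchwartzMap.compCLMOfContinuousLinearEquiv ℝ (ContinuousLinearEquiv.neg ℝ) f with hF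
  have hFx : ∀ x : ℝ, F x = f x - f (-x) := by
    intro x
    simp [hF, SchwartzMap.sub_apply]
  have hF0 : F 0 = 0 := by rw [hFx]; simp
  refine ⟨SchwartzMap.derivCLM ℝ ℝ f + b • qS F hF0, fun x hx => ?_⟩
  rw [SchwartzMap.add_apply, SchwartzMap.smul_apply, SchwartzMap.derivCLM_apply,
    qS_eq F hF0 hx, hFx]
  field_simp
  rw [smul_eq_mul, mul_add, mul_div_assoc', mul_div_assoc', mul_div_cancel_left₀ _ hx]
  ring
end

section
/- Let φ_{2ℓ}(x) := e^{−x²/2}·L_ℓ^{(b−1/2)}(x²) and φ_{2ℓ+1}(x) := x·e^{−x²/2}·L_ℓ^{(b+1/2)}(x²), where L_ℓ^{(ν)} are generalized Laguerre polynomials. Then the Dunkl-type operator T_b f(x) := f'(x) + b·(f(x)−f(−x))/x satisfies T_b φ_{2ℓ} = −φ_{2ℓ+1} − φ_{2ℓ−1} for ℓ ≥ 1, i.e. away from x=0 one has φ_{2ℓ}'(x) + b·(φ_{2ℓ}(x)−φ_{2ℓ}(−x))/x = −φ_{2ℓ+1}(x) − φ_{2ℓ−1}(x). -/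
/-- Generalized Laguerre polynomial `L_ℓ^{(ν)}(t)`. -/
noncomputable def lag (ν : ℝ) (l : ℕ) (t : ℝ) : ℝ :=
  ∑ k ∈ Finset.range (l + 1), (-1 : ℝ) ^ k * Real.Gamma (l + ν + 1) /
    (Real.Gamma (k + ν + 1) * Nat.factorial (l - k) * Nat.factorial k) * t ^ k

noncomputable def phiEven (b : ℝ) (l : ℕ) (x : ℝ) : ℝ :=
  Real.exp (-x^2 / 2) * lag (b - 1/2) l (x^2)

noncomputable def phiOdd (b : ℝ) (l : ℕ) (x : ℝ) : ℝ :=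
  x * Real.exp (-x^2 / 2) * lag (b + 1/2) l (x^2)

noncomputable def lagD (ν : ℝ) (l : ℕ) (t : ℝ) : ℝ :=
  ∑ k ∈ Finset.range (l + 1), (-1 : ℝ) ^ k * Real.Gamma (l + ν + 1) /
    (Real.Gamma (k + ν + 1) * Nat.factorial (l - k) * Nat.factorial k) * ((k : ℝ) * t ^ (k - 1))

lemma hasDerivAt_lag (ν : ℝ) (l : ℕ) (t : ℝ) : HasDerivAt (lag ν l) (lagD ν l t) t := by
  have : HasDerivAt (fun t : ℝ => ∑ k ∈ Finset.range (l + 1),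
      (-1 : ℝ) ^ k * Real.Gamma (l + ν + 1) /
        (Real.Gamma (k + ν + 1) * Nat.factorial (l - k) * Nat.factorial k) * t ^ k)
      (∑ k ∈ Finset.range (l + 1), (-1 : ℝ) ^ k * Real.Gamma (l + ν + 1) /
        (Real.Gamma (k + ν + 1) * Nat.factorial (l - k) * Nat.factorial k) * ((k : ℝ) * t ^ (k - 1))) t := by
    apply HasDerivAt.fun_sum
    intro k _
    exact (hasDerivAt_pow k t).const_mul _
  exact this

lemma term_key (a : ℝ) (ha : -1 < a) (m k : ℕ) (hk : k ≤ m) (t : ℝ) :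
    (-1 : ℝ) ^ k * Real.Gamma ((m + 1 : ℕ) + a + 1) /
      (Real.Gamma (k + a + 1) * Nat.factorial (m + 1 - k) * Nat.factorial k) * t ^ k
    - 2 * ((-1 : ℝ) ^ (k + 1) * Real.Gamma ((m + 1 : ℕ) + a + 1) /
      (Real.Gamma ((k + 1 : ℕ) + a + 1) * Nat.factorial (m + 1 - (k + 1)) * Nat.factorial (k + 1))
        * (((k + 1 : ℕ) : ℝ) * t ^ (k + 1 - 1)))
    = (-1 : ℝ) ^ k * Real.Gamma ((m + 1 : ℕ) + (a + 1) + 1) /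
      (Real.Gamma (k + (a + 1) + 1) * Nat.factorial (m + 1 - k) * Nat.factorial k) * t ^ k
    + (-1 : ℝ) ^ k * Real.Gamma ((m : ℕ) + (a + 1) + 1) /
      (Real.Gamma (k + (a + 1) + 1) * Nat.factorial (m - k) * Nat.factorial k) * t ^ k := by
  have hkm : (k : ℝ) ≤ m := Nat.cast_le.2 hk
  have hk0 : (0 : ℝ) < (k : ℝ) + a + 1 := by
    have : (0:ℝ) ≤ (k:ℝ) := Nat.cast_nonneg k
    linarith
  have hm0 : (0 : ℝ) < (m : ℝ) + a + 2 := by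
    have : (0:ℝ) ≤ (m:ℝ) := Nat.cast_nonneg m
    linarith
  have hΓk : Real.Gamma ((k : ℝ) + a + 1) ≠ 0 := (Real.Gamma_pos_of_pos hk0).ne'
  have hΓm : Real.Gamma ((m : ℝ) + a + 2) ≠ 0 := (Real.Gamma_pos_of_pos hm0).ne'
  rw [show m + 1 - k = (m - k) + 1 from by omega, show m + 1 - (k + 1) = m - k from by omega,
    Nat.factorial_succ (m - k), Nat.factorial_succ k, Nat.add_sub_cancel]
  push_cast [Nat.cast_sub hk]
  rw [show (k:ℝ) + 1 + a + 1 = ((k:ℝ) + a + 1) + 1 from by ring,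
    show (k:ℝ) + (a + 1) + 1 = ((k:ℝ) + a + 1) + 1 from by ring,
    show (m:ℝ) + 1 + (a + 1) + 1 = ((m:ℝ) + a + 2) + 1 from by ring,
    show (m:ℝ) + 1 + a + 1 = (m:ℝ) + a + 2 from by ring,
    show (m:ℝ) + (a + 1) + 1 = (m:ℝ) + a + 2 from by ring,
    Real.Gamma_add_one hk0.ne', Real.Gamma_add_one hm0.ne']
  have hf1 : ((Nat.factorial (m - k) : ℝ)) ≠ 0 := Nat.cast_ne_zero.2 (Nat.factorial_ne_zero _)
  have hf2 : ((Nat.factorial k : ℝ)) ≠ 0 := Nat.cast_ne_zero.2 (Nat.factorial_ne_zero _)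
  have hmk1 : ((m:ℝ) - k + 1) ≠ 0 := by linarith
  have hkk : ((k:ℝ) + 1) ≠ 0 := by positivity
  field_simp
  ring

lemma key (a : ℝ) (ha : -1 < a) (m : ℕ) (t : ℝ) :
    lag a (m + 1) t - 2 * lagD a (m + 1) t = lag (a + 1) (m + 1) t + lag (a + 1) m t := by
  have hD : lagD a (m + 1) t = ∑ k ∈ Finset.range (m + 1),
      (-1 : ℝ) ^ (k + 1) * Real.Gamma ((m + 1 : ℕ) + a + 1) /
        (Real.Gamma ((k + 1 : ℕ) + a + 1) * Nat.factorial (m + 1 - (k + 1)) * Nat.factorial (k + 1))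
        * (((k + 1 : ℕ) : ℝ) * t ^ (k + 1 - 1)) := by
    unfold lagD
    rw [Finset.sum_range_succ']
    simp
  have hL : lag a (m + 1) t = (∑ k ∈ Finset.range (m + 1),
      (-1 : ℝ) ^ k * Real.Gamma ((m + 1 : ℕ) + a + 1) /
        (Real.Gamma (k + a + 1) * Nat.factorial (m + 1 - k) * Nat.factorial k) * t ^ k)
      + (-1 : ℝ) ^ (m + 1) * Real.Gamma ((m + 1 : ℕ) + a + 1) /
        (Real.Gamma ((m + 1 : ℕ) + a + 1) * Nat.factorial (m + 1 - (m + 1)) * Nat.factorial (m + 1))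
        * t ^ (m + 1) := by
    unfold lag
    rw [Finset.sum_range_succ]
  have hM : lag (a + 1) (m + 1) t = (∑ k ∈ Finset.range (m + 1),
      (-1 : ℝ) ^ k * Real.Gamma ((m + 1 : ℕ) + (a + 1) + 1) /
        (Real.Gamma (k + (a + 1) + 1) * Nat.factorial (m + 1 - k) * Nat.factorial k) * t ^ k)
      + (-1 : ℝ) ^ (m + 1) * Real.Gamma ((m + 1 : ℕ) + (a + 1) + 1) /
        (Real.Gamma ((m + 1 : ℕ) + (a + 1) + 1) * Nat.factorial (m + 1 - (m + 1))
          * Nat.factorial (m + 1)) * t ^ (m + 1) := by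
    unfold lag
    rw [Finset.sum_range_succ]
  have hE : lag (a + 1) m t = ∑ k ∈ Finset.range (m + 1),
      (-1 : ℝ) ^ k * Real.Gamma ((m : ℕ) + (a + 1) + 1) /
        (Real.Gamma (k + (a + 1) + 1) * Nat.factorial (m - k) * Nat.factorial k) * t ^ k := rfl
  have hsum : ∑ k ∈ Finset.range (m + 1),
      ((-1 : ℝ) ^ k * Real.Gamma ((m + 1 : ℕ) + a + 1) /
        (Real.Gamma (k + a + 1) * Nat.factorial (m + 1 - k) * Nat.factorial k) * t ^ k
      - 2 * ((-1 : ℝ) ^ (k + 1) * Real.Gamma ((m + 1 : ℕ) + a + 1) /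
        (Real.Gamma ((k + 1 : ℕ) + a + 1) * Nat.factorial (m + 1 - (k + 1)) * Nat.factorial (k + 1))
        * (((k + 1 : ℕ) : ℝ) * t ^ (k + 1 - 1))))
      = ∑ k ∈ Finset.range (m + 1),
      ((-1 : ℝ) ^ k * Real.Gamma ((m + 1 : ℕ) + (a + 1) + 1) /
        (Real.Gamma (k + (a + 1) + 1) * Nat.factorial (m + 1 - k) * Nat.factorial k) * t ^ k
      + (-1 : ℝ) ^ k * Real.Gamma ((m : ℕ) + (a + 1) + 1) /
        (Real.Gamma (k + (a + 1) + 1) * Nat.factorial (m - k) * Nat.factorial k) * t ^ k) := by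
    refine Finset.sum_congr rfl fun k hkr => ?_
    exact term_key a ha m k (by simpa using Nat.lt_succ_iff.mp (Finset.mem_range.mp hkr)) t
  rw [Finset.sum_sub_distrib, Finset.sum_add_distrib] at hsum
  have htopC : (-1 : ℝ) ^ (m + 1) * Real.Gamma ((m + 1 : ℕ) + a + 1) /
        (Real.Gamma ((m + 1 : ℕ) + a + 1) * Nat.factorial (m + 1 - (m + 1)) * Nat.factorial (m + 1))
        * t ^ (m + 1)
      = (-1 : ℝ) ^ (m + 1) * t ^ (m + 1) / Nat.factorial (m + 1) := by
    have h0 : (0 : ℝ) < ((m + 1 : ℕ) : ℝ) + a + 1 := by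
      push_cast; have : (0:ℝ) ≤ (m:ℝ) := Nat.cast_nonneg m; linarith
    have hΓ : Real.Gamma ((m : ℝ) + 1 + a + 1) ≠ 0 := by
      have := (Real.Gamma_pos_of_pos h0).ne'; push_cast at this ⊢; exact this
    rw [Nat.sub_self, Nat.factorial_zero]
    push_cast
    field_simp
  have htopD : (-1 : ℝ) ^ (m + 1) * Real.Gamma ((m + 1 : ℕ) + (a + 1) + 1) /
        (Real.Gamma ((m + 1 : ℕ) + (a + 1) + 1) * Nat.factorial (m + 1 - (m + 1))
          * Nat.factorial (m + 1)) * t ^ (m + 1)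
      = (-1 : ℝ) ^ (m + 1) * t ^ (m + 1) / Nat.factorial (m + 1) := by
    have h0 : (0 : ℝ) < ((m + 1 : ℕ) : ℝ) + (a + 1) + 1 := by
      push_cast; have : (0:ℝ) ≤ (m:ℝ) := Nat.cast_nonneg m; linarith
    have hΓ : Real.Gamma ((m : ℝ) + 1 + (a + 1) + 1) ≠ 0 := by
      have := (Real.Gamma_pos_of_pos h0).ne'; push_cast at this ⊢; exact this
    rw [Nat.sub_self, Nat.factorial_zero]
    push_cast
    field_simp
  rw [hL, hD, hM, hE, htopC, htopD, Finset.mul_sum]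
  linarith [hsum]

theorem stmt6 (b : ℝ) (hb : -1/2 < b) (l : ℕ) (hl : 1 ≤ l) (x : ℝ) (hx : x ≠ 0) :
    deriv (phiEven b l) x + b * (phiEven b l x - phiEven b l (-x)) / x
      = -(phiOdd b l x) - phiOdd b (l - 1) x := by
  obtain ⟨m, rfl⟩ : ∃ m, l = m + 1 := ⟨l - 1, by omega⟩
  have heven : phiEven b (m + 1) (-x) = phiEven b (m + 1) x := by
    simp [phiEven, neg_sq]
  have h1 : HasDerivAt (fun y : ℝ => -y ^ 2 / 2) (-x) x := by
    have : HasDerivAt (fun y : ℝ => -y ^ 2 / 2) (-(((2:ℕ):ℝ) * x ^ (2 - 1)) / 2) x := ((hasDerivAt_pow 2 x).neg.div_const 2)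
    convert this using 1
    rw [show (2:ℕ) - 1 = 1 from rfl]; push_cast; ring
  have h2 : HasDerivAt (fun y : ℝ => Real.exp (-y ^ 2 / 2)) (Real.exp (-x ^ 2 / 2) * (-x)) x :=
    h1.exp
  have h3 : HasDerivAt (fun y : ℝ => y ^ 2) (2 * x) x := by
    simpa using hasDerivAt_pow 2 x
  have h4 : HasDerivAt (fun y : ℝ => lag (b - 1/2) (m + 1) (y ^ 2))
      (lagD (b - 1/2) (m + 1) (x ^ 2) * (2 * x)) x :=
    by have := (hasDerivAt_lag (b - 1/2) (m + 1) (x ^ 2)).comp x h3; exact this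
  have h5 : HasDerivAt (phiEven b (m + 1))
      (Real.exp (-x ^ 2 / 2) * (-x) * lag (b - 1/2) (m + 1) (x ^ 2)
        + Real.exp (-x ^ 2 / 2) * (lagD (b - 1/2) (m + 1) (x ^ 2) * (2 * x))) x := h2.mul h4
  rw [h5.deriv, heven, sub_self, mul_zero, zero_div, add_zero]
  have hkey := key (b - 1/2) (by linarith) m (x ^ 2)
  have hba : b - 1/2 + 1 = b + 1/2 := by ring
  rw [hba] at hkey
  simp only [phiOdd, Nat.add_sub_cancel]
  linear_combination (-(x) * Real.exp (-x ^ 2 / 2)) * hkey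
end

section
/- Sokhotski–Plemelj-type limit lemma: let G_ε^± (ε > 0) be measurable functions on ℝ such that (1) G_ε^±(x) → G_0^±(x) a.e. as ε → 0+; (2) G_ε^±(0) → G_0^±(0) with G_0^±(0) finite; (3) there exist ε_0, δ > 0, h₁ ∈ L¹(−δ, δ) and h₂ ∈ L¹(ℝ∖(−δ,δ)) such that |(G_ε^±(x) − G_ε^±(0))/(x ± iε)| ≤ h₁(x) for 0 < ε < ε_0 and |x| < δ, and |G_ε^±(x)/(x ± iε)| ≤ h₂(x) for 0 < ε < ε_0 and |x| > δ. Then lim_{ε→0+} ∫_ℝ (−1/(2πi))·(G_ε^+(x)/(x+iε) − G_ε^−(x)/(x−iε)) dx = (G_0^+(0) + G_0^−(0))/2 + (−1/(2πi))·p.v.∫_ℝ (G_0^+(x) − G_0^−(x))/x dx. -/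
open MeasureTheory Filter Complex Set Topology

lemma auxne (ε : ℝ) (hε : 0 < ε) (s : ℝ) (hs0 : s ≠ 0) (x : ℝ) :
    (x : ℂ) + (s * ε) * I ≠ 0 := by
  intro h
  have him := congrArg Complex.im h
  simp at him
  rcases him with h|h
  · exact hs0 h
  · exact hε.ne' h

lemma auxpt (ε : ℝ) (hε : 0 < ε) (s : ℝ) (hs : s = 1 ∨ s = -1) (x : ℝ) :
    ((x : ℂ) + (s * ε) * I)⁻¹
      = ((x / (x ^ 2 + ε ^ 2) : ℝ) : ℂ) - ((s * ε / (x ^ 2 + ε ^ 2) : ℝ) : ℂ) * I := by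
  have hsc : ((s:ℂ)) ^ 2 = 1 := by rcases hs with h|h <;> simp [h]
  have hd : (x:ℝ) ^ 2 + ε ^ 2 ≠ 0 := by positivity
  have hdc : ((x:ℂ) ^ 2 + (ε:ℂ) ^ 2) ≠ 0 := by exact_mod_cast Complex.ofReal_ne_zero.2 hd
  have hnum : ((x:ℂ) + s*ε*I) * ((x:ℂ) - s*ε*I) = (x:ℂ)^2 + (ε:ℂ)^2 := by
    linear_combination (-(ε:ℂ)^2 * (s:ℂ)^2) * Complex.I_sq + (ε:ℂ)^2 * hsc
  have key : ((x : ℂ) + (s * ε) * I) *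
      (((x / (x ^ 2 + ε ^ 2) : ℝ) : ℂ) - ((s * ε / (x ^ 2 + ε ^ 2) : ℝ) : ℂ) * I) = 1 := by
    calc ((x : ℂ) + (s * ε) * I) *
        (((x / (x ^ 2 + ε ^ 2) : ℝ) : ℂ) - ((s * ε / (x ^ 2 + ε ^ 2) : ℝ) : ℂ) * I)
        = (((x:ℂ) + s*ε*I) * ((x:ℂ) - s*ε*I)) / ((x:ℂ)^2 + (ε:ℂ)^2) := by
          push_cast; ring
      _ = 1 := by rw [hnum, div_self hdc]
  exact inv_eq_of_mul_eq_one_right key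

lemma auxR1 (δ ε : ℝ) (hε : 0 < ε) :
    ∫ x in Ioo (-δ) δ, x / (x ^ 2 + ε ^ 2) = 0 := by
  rcases le_or_gt δ 0 with h | h
  · rw [Ioo_eq_empty (by linarith), Measure.restrict_empty, integral_zero_measure]
  have hle : (-δ : ℝ) ≤ δ := by linarith
  rw [← integral_Ioc_eq_integral_Ioo, ← intervalIntegral.integral_of_le hle]
  have hd : ∀ x : ℝ, HasDerivAt (fun y : ℝ => Real.log (y ^ 2 + ε ^ 2) / 2)
      (x / (x ^ 2 + ε ^ 2)) x := by
    intro x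
    have hne : x ^ 2 + ε ^ 2 ≠ 0 := by positivity
    have h1 : HasDerivAt (fun y : ℝ => y ^ 2 + ε ^ 2) (2 * x) x := by
      simpa using ((hasDerivAt_pow 2 x).add_const (ε ^ 2))
    have := (h1.log hne).div_const 2
    refine this.congr_deriv ?_
    field_simp
  rw [intervalIntegral.integral_eq_sub_of_hasDerivAt (fun x _ => hd x) ?hint]
  · ring_nf
  case hint =>
    apply Continuous.intervalIntegrable
    exact continuous_id.div (by continuity) (fun x => by positivity)

lemma auxR2 (δ ε : ℝ) (hδ : 0 ≤ δ) (hε : 0 < ε) :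
    ∫ x in Ioo (-δ) δ, ε / (x ^ 2 + ε ^ 2) = 2 * Real.arctan (δ / ε) := by
  have hle : (-δ : ℝ) ≤ δ := by linarith
  rw [← integral_Ioc_eq_integral_Ioo, ← intervalIntegral.integral_of_le hle]
  have hd : ∀ x : ℝ, HasDerivAt (fun y : ℝ => Real.arctan (y / ε))
      (ε / (x ^ 2 + ε ^ 2)) x := by
    intro x
    have h1 : HasDerivAt (fun y : ℝ => y / ε) (1 / ε) x := by
      simpa using (hasDerivAt_id x).div_const ε
    have := (Real.hasDerivAt_arctan (x / ε)).comp x h1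
    refine this.congr_deriv ?_
    field_simp
    ring
  rw [intervalIntegral.integral_eq_sub_of_hasDerivAt (fun x _ => hd x) ?hint]
  · rw [neg_div, Real.arctan_neg]; ring
  case hint =>
    apply Continuous.intervalIntegrable
    exact continuous_const.div (by continuity) (fun x => by positivity)

lemma auxOfReal {X : Type*} [MeasurableSpace X] (μ : Measure X) (f : X → ℝ) :
    ∫ x, ((f x : ℝ) : ℂ) ∂μ = ((∫ x, f x ∂μ : ℝ) : ℂ) := integral_ofReal

lemma auxJ (δ ε : ℝ) (hδ : 0 ≤ δ) (hε : 0 < ε) (s : ℝ) (hs : s = 1 ∨ s = -1) :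
    ∫ x in Ioo (-δ) δ, ((x : ℂ) + (s * ε) * I)⁻¹
      = -(s * (2 * Real.arctan (δ / ε))) * I := by
  have hc1 : Continuous fun x : ℝ => x / (x ^ 2 + ε ^ 2) :=
    continuous_id.div (by continuity) (fun x => by positivity)
  have hc2 : Continuous fun x : ℝ => s * ε / (x ^ 2 + ε ^ 2) :=
    continuous_const.div (by continuity) (fun x => by positivity)
  have hi1 : IntegrableOn (fun x : ℝ => ((x / (x ^ 2 + ε ^ 2) : ℝ) : ℂ)) (Ioo (-δ) δ) :=
    ((Complex.continuous_ofReal.comp hc1).integrableOn_Icc).mono_set Ioo_subset_Icc_self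
  have hi2 : IntegrableOn (fun x : ℝ => ((s * ε / (x ^ 2 + ε ^ 2) : ℝ) : ℂ) * I) (Ioo (-δ) δ) :=
    (((Complex.continuous_ofReal.comp hc2).mul continuous_const).integrableOn_Icc).mono_set
      Ioo_subset_Icc_self
  calc ∫ x in Ioo (-δ) δ, ((x : ℂ) + (s * ε) * I)⁻¹
      = ∫ x in Ioo (-δ) δ,
          (((x / (x ^ 2 + ε ^ 2) : ℝ) : ℂ) - ((s * ε / (x ^ 2 + ε ^ 2) : ℝ) : ℂ) * I) := by
        exact setIntegral_congr_fun measurableSet_Ioo fun x _ => auxpt ε hε s hs x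
    _ = (∫ x in Ioo (-δ) δ, ((x / (x ^ 2 + ε ^ 2) : ℝ) : ℂ))
        - ∫ x in Ioo (-δ) δ, ((s * ε / (x ^ 2 + ε ^ 2) : ℝ) : ℂ) * I := integral_sub hi1 hi2
    _ = ((∫ x in Ioo (-δ) δ, x / (x ^ 2 + ε ^ 2) : ℝ) : ℂ)
        - ((∫ x in Ioo (-δ) δ, s * ε / (x ^ 2 + ε ^ 2) : ℝ) : ℂ) * I := by
        rw [integral_mul_const, auxOfReal, auxOfReal]
    _ = -(s * (2 * Real.arctan (δ / ε))) * I := by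
        rw [auxR1 δ ε hε]
        have : ∫ x in Ioo (-δ) δ, s * ε / (x ^ 2 + ε ^ 2)
            = s * (2 * Real.arctan (δ / ε)) := by
          rw [show (fun x : ℝ => s * ε / (x ^ 2 + ε ^ 2))
              = fun x : ℝ => s * (ε / (x ^ 2 + ε ^ 2)) by funext x; ring]
          rw [integral_const_mul, auxR2 δ ε hδ hε]
        rw [this]; push_cast; ring
lemma auxInvInt (a b : ℝ) (h : (0:ℝ) ∉ Icc a b) :
    IntegrableOn (fun x : ℝ => ((x : ℂ))⁻¹) (Ioo a b) := by
  apply (ContinuousOn.integrableOn_compact isCompact_Icc ?_).mono_set Ioo_subset_Icc_self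
  apply ContinuousOn.inv₀ (Complex.continuous_ofReal.continuousOn)
  intro x hx
  simp only [ne_eq, Complex.ofReal_eq_zero]
  rintro rfl
  exact h hx

lemma auxPV0 (η δ : ℝ) (h0 : 0 < η) (hηδ : η < δ) :
    ∫ x in Ioo (-δ) (-η) ∪ Ioo η δ, ((x : ℂ))⁻¹ = 0 := by
  have hδ0 : 0 < δ := h0.trans hηδ
  have hd : Disjoint (Ioo (-δ) (-η)) (Ioo η δ) := by
    apply Set.disjoint_left.2
    rintro x ⟨_, h2⟩ ⟨h3, _⟩
    linarith
  have hi1 : IntegrableOn (fun x : ℝ => ((x : ℂ))⁻¹) (Ioo (-δ) (-η)) :=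
    auxInvInt _ _ (by intro h; simp at h; linarith [h.1, h.2])
  have hi2 : IntegrableOn (fun x : ℝ => ((x : ℂ))⁻¹) (Ioo η δ) :=
    auxInvInt _ _ (by intro h; simp at h; linarith [h.1, h.2])
  rw [setIntegral_union hd measurableSet_Ioo hi1 hi2]
  have key : ∀ a b : ℝ, 0 < a → a < b → (0:ℝ) ∉ Set.uIcc a b → True := fun _ _ _ _ _ => trivial
  have e1 : ∫ x in Ioo (-δ) (-η), ((x:ℂ))⁻¹ = ((Real.log ((-η)/(-δ)) : ℝ) : ℂ) := by
    rw [show (fun x : ℝ => ((x:ℂ))⁻¹) = fun x : ℝ => ((x⁻¹ : ℝ) : ℂ) by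
      funext x; simp]
    rw [auxOfReal, ← integral_Ioc_eq_integral_Ioo,
      ← intervalIntegral.integral_of_le (by linarith : (-δ:ℝ) ≤ -η),
      integral_inv (by intro h; rw [Set.mem_uIcc] at h; rcases h with ⟨h1,h2⟩|⟨h1,h2⟩ <;> linarith)]
  have e2 : ∫ x in Ioo η δ, ((x:ℂ))⁻¹ = ((Real.log (δ/η) : ℝ) : ℂ) := by
    rw [show (fun x : ℝ => ((x:ℂ))⁻¹) = fun x : ℝ => ((x⁻¹ : ℝ) : ℂ) by
      funext x; simp]
    rw [auxOfReal, ← integral_Ioc_eq_integral_Ioo,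
      ← intervalIntegral.integral_of_le (by linarith : η ≤ δ),
      integral_inv (by intro h; rw [Set.mem_uIcc] at h; rcases h with ⟨h1,h2⟩|⟨h1,h2⟩ <;> linarith)]
  rw [e1, e2, neg_div_neg_eq, ← Complex.ofReal_add,
    Real.log_div h0.ne' hδ0.ne', Real.log_div hδ0.ne' h0.ne']
  norm_num

lemma auxArctan (δ : ℝ) (hδ : 0 < δ) :
    Tendsto (fun ε : ℝ => Real.arctan (δ / ε)) (𝓝[>] 0) (𝓝 (Real.pi / 2)) := by
  have h1 : Tendsto (fun ε : ℝ => δ / ε) (𝓝[>] (0:ℝ)) atTop := by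
    simpa [div_eq_mul_inv] using tendsto_inv_nhdsGT_zero.const_mul_atTop hδ
  exact (Real.tendsto_arctan_atTop.mono_right nhdsWithin_le_nhds).comp h1

lemma auxDp (x : ℝ) : Tendsto (fun ε : ℝ => (x:ℂ) + ε * I) (𝓝 0) (𝓝 (x:ℂ)) := by
  have hc : Continuous fun ε : ℝ => (x:ℂ) + ε * I := by continuity
  simpa using hc.tendsto 0

lemma auxDm (x : ℝ) : Tendsto (fun ε : ℝ => (x:ℂ) - ε * I) (𝓝 0) (𝓝 (x:ℂ)) := by
  have hc : Continuous fun ε : ℝ => (x:ℂ) - ε * I := by continuity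
  simpa using hc.tendsto 0

lemma auxnep (ε : ℝ) (hε : 0 < ε) (x : ℝ) : (x : ℂ) + ε * I ≠ 0 := by
  intro h
  have him := congrArg Complex.im h
  simp at him
  exact hε.ne' him

lemma auxnem (ε : ℝ) (hε : 0 < ε) (x : ℝ) : (x : ℂ) - ε * I ≠ 0 := by
  intro h
  have him := congrArg Complex.im h
  simp [sub_eq_add_neg] at him
  exact hε.ne' him

lemma auxcontp (ε : ℝ) (hε : 0 < ε) : Continuous (fun x : ℝ => ((x:ℂ) + ε * I)⁻¹) :=
  Continuous.inv₀ (by continuity) (auxnep ε hε)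

lemma auxcontm (ε : ℝ) (hε : 0 < ε) : Continuous (fun x : ℝ => ((x:ℂ) - ε * I)⁻¹) :=
  Continuous.inv₀ (by continuity) (auxnem ε hε)


lemma auxJp (δ ε : ℝ) (hδ : 0 ≤ δ) (hε : 0 < ε) :
    ∫ x in Ioo (-δ) δ, ((x : ℂ) + ε * I)⁻¹
      = -(((2 * Real.arctan (δ / ε) : ℝ)) : ℂ) * I := by
  have := auxJ δ ε hδ hε 1 (Or.inl rfl)
  push_cast at this ⊢
  simpa using this

lemma auxJm (δ ε : ℝ) (hδ : 0 ≤ δ) (hε : 0 < ε) :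
    ∫ x in Ioo (-δ) δ, ((x : ℂ) - ε * I)⁻¹
      = (((2 * Real.arctan (δ / ε) : ℝ)) : ℂ) * I := by
  have := auxJ δ ε hδ hε (-1) (Or.inr rfl)
  push_cast at this ⊢
  simpa [sub_eq_add_neg, neg_mul] using this
lemma auxFinal (A B P Q : ℂ) :
    (-1 / (2 * (Real.pi:ℂ) * I)) * (A + B + (P * (-(Real.pi:ℂ) * I) - Q * ((Real.pi:ℂ) * I)))
      = (P + Q)/2 + (-1 / (2 * (Real.pi:ℂ) * I)) * (A + B) := by
  have hπ : ((Real.pi:ℝ):ℂ) ≠ 0 := Complex.ofReal_ne_zero.2 Real.pi_ne_zero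
  have hI := Complex.I_ne_zero
  field_simp
  ring_nf
theorem stmt13
    (Gp Gm : ℝ → ℝ → ℂ) (G0p G0m : ℝ → ℂ)
    (hmeas : ∀ ε : ℝ, 0 < ε → Measurable (Gp ε) ∧ Measurable (Gm ε))
    (hae : ∀ᵐ x : ℝ, Tendsto (fun ε : ℝ => Gp ε x) (𝓝[>] 0) (𝓝 (G0p x)) ∧
                     Tendsto (fun ε : ℝ => Gm ε x) (𝓝[>] 0) (𝓝 (G0m x)))
    (h0p : Tendsto (fun ε : ℝ => Gp ε 0) (𝓝[>] 0) (𝓝 (G0p 0)))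
    (h0m : Tendsto (fun ε : ℝ => Gm ε 0) (𝓝[>] 0) (𝓝 (G0m 0)))
    (hdom : ∃ ε₀ > (0:ℝ), ∃ δ > (0:ℝ), ∃ h₁ h₂ : ℝ → ℝ,
      IntegrableOn h₁ (Ioo (-δ) δ) ∧ IntegrableOn h₂ {x : ℝ | δ < |x|} ∧
      (∀ ε : ℝ, 0 < ε → ε < ε₀ → ∀ x : ℝ, |x| < δ →
        ‖(Gp ε x - Gp ε 0) / (x + ε * I)‖ ≤ h₁ x ∧
        ‖(Gm ε x - Gm ε 0) / (x - ε * I)‖ ≤ h₁ x) ∧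
      (∀ ε : ℝ, 0 < ε → ε < ε₀ → ∀ x : ℝ, δ < |x| →
        ‖Gp ε x / (x + ε * I)‖ ≤ h₂ x ∧
        ‖Gm ε x / (x - ε * I)‖ ≤ h₂ x)) :
    ∃ L : ℂ,
      Tendsto (fun η : ℝ => ∫ x in {x : ℝ | η < |x|}, (G0p x - G0m x) / x)
        (𝓝[>] 0) (𝓝 L) ∧
      Tendsto (fun ε : ℝ =>
          ∫ x : ℝ, (-1 / (2 * (Real.pi : ℂ) * I)) *
            (Gp ε x / (x + ε * I) - Gm ε x / (x - ε * I)))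
        (𝓝[>] 0)
        (𝓝 ((G0p 0 + G0m 0) / 2 + (-1 / (2 * (Real.pi : ℂ) * I)) * L)) := by
  obtain ⟨ε₀, hε₀, δ, hδ, h₁, h₂, hInt₁, hInt₂, hbd₁, hbd₂⟩ := hdom
  set S : Set ℝ := Ioo (-δ) δ with hSdef
  set T : Set ℝ := {x : ℝ | δ < |x|} with hTdef
  have hS : MeasurableSet S := measurableSet_Ioo
  have hT : MeasurableSet T := measurableSet_lt measurable_const continuous_abs.measurable
  have hE : ∀ η : ℝ, MeasurableSet {x : ℝ | η < |x|} :=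
    fun η => measurableSet_lt measurable_const continuous_abs.measurable
  -- Sᶜ is a.e. equal to T
  have hTsub : T ⊆ Sᶜ := by
    intro x hx
    simp only [hTdef, mem_setOf_eq] at hx
    simp only [hSdef, mem_compl_iff, mem_Ioo, not_and, not_lt]
    intro h1
    rcases lt_abs.1 hx with h | h
    · linarith
    · linarith
  have hScT : (Sᶜ : Set ℝ) =ᵐ[volume] T := by
    rw [MeasureTheory.ae_eq_set]
    constructor
    · refine measure_mono_null ?_ (((Set.finite_singleton δ).insert (-δ)).measure_zero volume)
      intro x hx
      simp only [hSdef, hTdef, mem_diff, mem_compl_iff, mem_Ioo, not_and, not_lt,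
        mem_setOf_eq] at hx
      obtain ⟨h1, h2⟩ := hx
      have h3 : -δ ≤ x ∧ x ≤ δ := abs_le.1 h2
      rcases lt_or_eq_of_le h3.1 with h4 | h4
      · right
        simp only [mem_singleton_iff]
        exact le_antisymm h3.2 (h1 h4)
      · left
        exact h4.symm
    · have : T \ Sᶜ = ∅ := diff_eq_empty.2 hTsub
      rw [this]
      simp
  -- sequence
  set u : ℕ → ℝ := fun n => ε₀ / (n + 2) with hudef
  have hupos : ∀ n, 0 < u n := fun n => div_pos hε₀ (by positivity)
  have hult : ∀ n, u n < ε₀ := fun n => div_lt_self hε₀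
    (by have := Nat.cast_nonneg (α := ℝ) n; linarith)
  have huT : Tendsto u atTop (𝓝[>] (0:ℝ)) := by
    apply tendsto_nhdsWithin_of_tendsto_nhds_of_eventually_within
    · apply Tendsto.div_atTop tendsto_const_nhds
      exact tendsto_atTop_add_const_right _ 2 tendsto_natCast_atTop_atTop
    · exact Eventually.of_forall hupos
  have hGp : AEStronglyMeasurable G0p (volume : Measure ℝ) :=
    aestronglyMeasurable_of_tendsto_ae atTop
      (fun n => ((hmeas (u n) (hupos n)).1).aestronglyMeasurable)
      (hae.mono fun x hx => hx.1.comp huT)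
  have hGm : AEStronglyMeasurable G0m (volume : Measure ℝ) :=
    aestronglyMeasurable_of_tendsto_ae atTop
      (fun n => ((hmeas (u n) (hupos n)).2).aestronglyMeasurable)
      (hae.mono fun x hx => hx.2.comp huT)
  have hx0ae : ∀ᵐ x : ℝ, x ≠ (0:ℝ) := by
    refine ae_iff.2 ?_
    have : {x : ℝ | ¬x ≠ 0} = {0} := by ext x; simp
    rw [this]
    simp
  have hmx : Measurable fun x : ℝ => (x : ℂ) := Complex.measurable_ofReal
  -- a.e. bounds on S
  have haeS : ∀ᵐ x : ℝ, x ≠ 0 → |x| < δ →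
      ‖(G0p x - G0p 0) / (x:ℂ)‖ ≤ h₁ x ∧ ‖(G0m x - G0m 0) / (x:ℂ)‖ ≤ h₁ x := by
    filter_upwards [hae] with x hx hx0 hxδ
    have hxc : ((x:ℂ)) ≠ 0 := Complex.ofReal_ne_zero.2 hx0
    constructor
    · have hnum : Tendsto (fun n => Gp (u n) x - Gp (u n) 0) atTop
          (𝓝 (G0p x - G0p 0)) := (hx.1.comp huT).sub (h0p.comp huT)
      have hden : Tendsto (fun n => (x:ℂ) + (u n) * I) atTop (𝓝 (x:ℂ)) :=
        (auxDp x).comp ((huT.mono_right nhdsWithin_le_nhds))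
      have hq := (hnum.div hden hxc).norm
      refine le_of_tendsto hq (Eventually.of_forall fun n => ?_)
      have := (hbd₁ (u n) (hupos n) (hult n) x hxδ).1
      simpa using this
    · have hnum : Tendsto (fun n => Gm (u n) x - Gm (u n) 0) atTop
          (𝓝 (G0m x - G0m 0)) := (hx.2.comp huT).sub (h0m.comp huT)
      have hden : Tendsto (fun n => (x:ℂ) - (u n) * I) atTop (𝓝 (x:ℂ)) :=
        (auxDm x).comp ((huT.mono_right nhdsWithin_le_nhds))
      have hq := (hnum.div hden hxc).norm
      refine le_of_tendsto hq (Eventually.of_forall fun n => ?_)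
      have := (hbd₁ (u n) (hupos n) (hult n) x hxδ).2
      simpa using this
  -- a.e. bounds on T
  have haeT : ∀ᵐ x : ℝ, δ < |x| →
      ‖G0p x / (x:ℂ)‖ ≤ h₂ x ∧ ‖G0m x / (x:ℂ)‖ ≤ h₂ x := by
    filter_upwards [hae] with x hx hxδ
    have hx0 : x ≠ 0 := by intro h; rw [h] at hxδ; simp at hxδ; linarith
    have hxc : ((x:ℂ)) ≠ 0 := Complex.ofReal_ne_zero.2 hx0
    constructor
    · have hden : Tendsto (fun n => (x:ℂ) + (u n) * I) atTop (𝓝 (x:ℂ)) :=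
        (auxDp x).comp ((huT.mono_right nhdsWithin_le_nhds))
      have hq := (((hx.1.comp huT)).div hden hxc).norm
      refine le_of_tendsto hq (Eventually.of_forall fun n => ?_)
      have := (hbd₂ (u n) (hupos n) (hult n) x hxδ).1
      simpa using this
    · have hden : Tendsto (fun n => (x:ℂ) - (u n) * I) atTop (𝓝 (x:ℂ)) :=
        (auxDm x).comp ((huT.mono_right nhdsWithin_le_nhds))
      have hq := (((hx.2.comp huT)).div hden hxc).norm
      refine le_of_tendsto hq (Eventually.of_forall fun n => ?_)
      have := (hbd₂ (u n) (hupos n) (hult n) x hxδ).2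
      simpa using this
  -- measurability of limit quotients
  have hinvm : AEStronglyMeasurable (fun x : ℝ => ((x:ℂ))⁻¹) (volume : Measure ℝ) :=
    hmx.inv.aestronglyMeasurable
  have hbrm : AEStronglyMeasurable
      (fun x : ℝ => ((G0p x - G0p 0) - (G0m x - G0m 0)) / (x:ℂ)) (volume : Measure ℝ) := by
    simp only [div_eq_mul_inv]
    exact ((hGp.sub aestronglyMeasurable_const).sub
      (hGm.sub aestronglyMeasurable_const)).mul hinvm
  have hfm : AEStronglyMeasurable (fun x : ℝ => (G0p x - G0m x) / (x:ℂ))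
      (volume : Measure ℝ) := by
    simp only [div_eq_mul_inv]
    exact (hGp.sub hGm).mul hinvm
  -- integrability of bracket on S
  have hintS : IntegrableOn
      (fun x : ℝ => ((G0p x - G0p 0) - (G0m x - G0m 0)) / (x:ℂ)) S := by
    refine Integrable.mono' (hInt₁.add hInt₁) hbrm.restrict ?_
    filter_upwards [ae_restrict_of_ae haeS, ae_restrict_of_ae hx0ae,
      ae_restrict_mem hS] with x hx hx0 hxS
    have hxδ : |x| < δ := abs_lt.2 ⟨hxS.1, hxS.2⟩
    have := hx hx0 hxδ
    calc ‖((G0p x - G0p 0) - (G0m x - G0m 0)) / (x:ℂ)‖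
        = ‖(G0p x - G0p 0) / (x:ℂ) - (G0m x - G0m 0) / (x:ℂ)‖ := by rw [← sub_div]
      _ ≤ ‖(G0p x - G0p 0) / (x:ℂ)‖ + ‖(G0m x - G0m 0) / (x:ℂ)‖ := norm_sub_le _ _
      _ ≤ h₁ x + h₁ x := add_le_add this.1 this.2
  -- integrability of f on T
  have hintT : IntegrableOn (fun x : ℝ => (G0p x - G0m x) / (x:ℂ)) T := by
    refine Integrable.mono' (hInt₂.add hInt₂) hfm.restrict ?_
    filter_upwards [ae_restrict_of_ae haeT, ae_restrict_mem hT] with x hx hxT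
    have := hx hxT
    calc ‖(G0p x - G0m x) / (x:ℂ)‖
        = ‖G0p x / (x:ℂ) - G0m x / (x:ℂ)‖ := by rw [← sub_div]
      _ ≤ ‖G0p x / (x:ℂ)‖ + ‖G0m x / (x:ℂ)‖ := norm_sub_le _ _
      _ ≤ h₂ x + h₂ x := add_le_add this.1 this.2
  set A : ℂ := ∫ x in S, ((G0p x - G0p 0) - (G0m x - G0m 0)) / (x:ℂ) with hAdef
  set B : ℂ := ∫ x in T, (G0p x - G0m x) / (x:ℂ) with hBdef
  refine ⟨A + B, ?_, ?_⟩
  · -- principal value limit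
    -- DCT for the indicator integrals over S
    have hDCT1 : Tendsto (fun η : ℝ => ∫ x in S,
        ({x : ℝ | η < |x|}.indicator
          (fun x => ((G0p x - G0p 0) - (G0m x - G0m 0)) / (x:ℂ)) x))
        (𝓝[>] (0:ℝ)) (𝓝 A) := by
      refine tendsto_integral_filter_of_dominated_convergence
        (fun x => h₁ x + h₁ x) ?_ ?_ (hInt₁.add hInt₁) ?_
      · exact Eventually.of_forall fun η => (hbrm.restrict).indicator (hE η)
      · refine Eventually.of_forall fun η => ?_
        filter_upwards [ae_restrict_of_ae haeS, ae_restrict_of_ae hx0ae,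
          ae_restrict_mem hS] with x hx hx0 hxS
        refine (norm_indicator_le_norm_self _ _).trans ?_
        have hxδ : |x| < δ := abs_lt.2 ⟨hxS.1, hxS.2⟩
        have := hx hx0 hxδ
        calc ‖((G0p x - G0p 0) - (G0m x - G0m 0)) / (x:ℂ)‖
            = ‖(G0p x - G0p 0) / (x:ℂ) - (G0m x - G0m 0) / (x:ℂ)‖ := by rw [← sub_div]
          _ ≤ ‖(G0p x - G0p 0) / (x:ℂ)‖ + ‖(G0m x - G0m 0) / (x:ℂ)‖ := norm_sub_le _ _
          _ ≤ h₁ x + h₁ x := add_le_add this.1 this.2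
      · filter_upwards [ae_restrict_of_ae hx0ae] with x hx0
        have habs : (0:ℝ) < |x| := abs_pos.2 hx0
        have hev : ∀ᶠ η in 𝓝[>] (0:ℝ), η < |x| :=
          mem_nhdsWithin_of_mem_nhds (Iio_mem_nhds habs)
        refine Tendsto.congr' ?_ tendsto_const_nhds
        filter_upwards [hev] with η hη
        exact (indicator_of_mem (show x ∈ {y : ℝ | η < |y|} from hη)
          (fun x => ((G0p x - G0p 0) - (G0m x - G0m 0)) / (x:ℂ))).symm
    have key1 : ∀ᶠ η in 𝓝[>] (0:ℝ),
        (∫ x in S, ({x : ℝ | η < |x|}.indicator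
          (fun x => ((G0p x - G0p 0) - (G0m x - G0m 0)) / (x:ℂ)) x)) + B
        = ∫ x in {x : ℝ | η < |x|}, (G0p x - G0m x) / (x:ℂ) := by
      filter_upwards [Ioo_mem_nhdsGT_of_mem (by exact ⟨le_refl 0, hδ⟩ : (0:ℝ) ∈ Ico 0 δ)]
        with η hη
      obtain ⟨hη0, hηδ⟩ := hη
      set E : Set ℝ := {x : ℝ | η < |x|} with hEdef
      have hES : E ∩ S = Ioo (-δ) (-η) ∪ Ioo η δ := by
        ext x
        simp only [hEdef, hSdef, mem_inter_iff, mem_setOf_eq, mem_Ioo, mem_union, lt_abs]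
        constructor
        · rintro ⟨h1 | h1, h2, h3⟩
          · right; exact ⟨h1, h3⟩
          · left; exact ⟨h2, by linarith⟩
        · rintro (⟨h1, h2⟩ | ⟨h1, h2⟩)
          · exact ⟨Or.inr (by linarith), h1, by linarith⟩
          · exact ⟨Or.inl h1, by linarith, h2⟩
      have hTE : T ⊆ E := fun x hx => by
        simp only [hTdef, mem_setOf_eq] at hx
        simp only [hEdef, mem_setOf_eq]
        linarith
      have hEdiff : E \ S =ᵐ[volume] T := by
        have h1 : E \ S = E ∩ Sᶜ := rfl
        have h2 : (E ∩ Sᶜ : Set ℝ) =ᵐ[volume] (E ∩ T : Set ℝ) :=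
          Filter.EventuallyEq.inter (Filter.EventuallyEq.refl _ _) hScT
        have h3 : E ∩ T = T := inter_eq_right.2 hTE
        rw [← h3]
        exact h2
      -- integrability on E ∩ S
      have hintinv : IntegrableOn (fun x : ℝ => ((x:ℂ))⁻¹) (Ioo (-δ) (-η) ∪ Ioo η δ) := by
        refine IntegrableOn.union ?_ ?_
        · exact auxInvInt _ _ (by intro h; rw [mem_Icc] at h; linarith [h.1, h.2])
        · exact auxInvInt _ _ (by intro h; rw [mem_Icc] at h; linarith [h.1, h.2])
      have heq : ∀ x : ℝ, (G0p x - G0m x) / (x:ℂ)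
          = ((G0p x - G0p 0) - (G0m x - G0m 0)) / (x:ℂ)
            + (G0p 0 - G0m 0) * ((x:ℂ))⁻¹ := by
        intro x
        simp only [div_eq_mul_inv]
        ring
      have hintES : IntegrableOn (fun x : ℝ => (G0p x - G0m x) / (x:ℂ)) (E ∩ S) := by
        rw [show (fun x : ℝ => (G0p x - G0m x) / (x:ℂ)) = fun x =>
            ((G0p x - G0p 0) - (G0m x - G0m 0)) / (x:ℂ)
              + (G0p 0 - G0m 0) * ((x:ℂ))⁻¹ from funext heq]
        refine Integrable.add ?_ ?_
        · exact hintS.mono_set inter_subset_right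
        · rw [hES]
          exact hintinv.const_mul _
      have hintEdiff : IntegrableOn (fun x : ℝ => (G0p x - G0m x) / (x:ℂ)) (E \ S) :=
        hintT.congr_set_ae hEdiff
      have hintE : IntegrableOn (fun x : ℝ => (G0p x - G0m x) / (x:ℂ)) E := by
        have h4 := hintES.union hintEdiff
        rwa [inter_union_diff] at h4
      have e1 : (∫ x in S, ({x : ℝ | η < |x|}.indicator
            (fun x => ((G0p x - G0p 0) - (G0m x - G0m 0)) / (x:ℂ)) x))
          = ∫ x in E ∩ S, ((G0p x - G0p 0) - (G0m x - G0m 0)) / (x:ℂ) := by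
        rw [setIntegral_indicator (hE η), Set.inter_comm]
      have e3 : (∫ x in E ∩ S, ((x:ℂ))⁻¹) = 0 := by
        rw [hES]
        exact auxPV0 η δ hη0 hηδ
      have e2 : (∫ x in E ∩ S, (G0p x - G0m x) / (x:ℂ))
          = ∫ x in E ∩ S, ((G0p x - G0p 0) - (G0m x - G0m 0)) / (x:ℂ) := by
        simp only [heq]
        rw [integral_add (hintS.mono_set inter_subset_right)
          (by rw [hES] at *; exact hintinv.const_mul _),
          integral_const_mul, e3, mul_zero, add_zero]
      have e4 : (∫ x in E \ S, (G0p x - G0m x) / (x:ℂ)) = B :=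
        setIntegral_congr_set hEdiff
      calc (∫ x in S, ({x : ℝ | η < |x|}.indicator
            (fun x => ((G0p x - G0p 0) - (G0m x - G0m 0)) / (x:ℂ)) x)) + B
          = (∫ x in E ∩ S, (G0p x - G0m x) / (x:ℂ))
            + ∫ x in E \ S, (G0p x - G0m x) / (x:ℂ) := by rw [e1, ← e2, e4]
        _ = ∫ x in E, (G0p x - G0m x) / (x:ℂ) := integral_inter_add_diff hS hintE
    exact Tendsto.congr' key1 (hDCT1.add tendsto_const_nhds)
  · -- the ε-limit
    have hIoo : Ioo (0:ℝ) ε₀ ∈ 𝓝[>] (0:ℝ) :=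
      Ioo_mem_nhdsGT_of_mem ⟨le_refl 0, hε₀⟩
    simp only [div_eq_mul_inv, integral_const_mul]
    -- DCT on S for the centered part
    have hTS : Tendsto (fun ε : ℝ => ∫ x in S,
        ((Gp ε x - Gp ε 0) * ((x:ℂ) + ε * I)⁻¹ - (Gm ε x - Gm ε 0) * ((x:ℂ) - ε * I)⁻¹))
        (𝓝[>] (0:ℝ)) (𝓝 A) := by
      refine tendsto_integral_filter_of_dominated_convergence
        (fun x => h₁ x + h₁ x) ?_ ?_ (hInt₁.add hInt₁) ?_
      · filter_upwards [hIoo] with ε hε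
        exact (Measurable.aestronglyMeasurable
          ((((hmeas ε hε.1).1.sub measurable_const).mul (hmx.add_const _).inv).sub
            (((hmeas ε hε.1).2.sub measurable_const).mul (hmx.sub_const _).inv))).restrict
      · filter_upwards [hIoo] with ε hε
        filter_upwards [ae_restrict_mem hS] with x hxS
        have hxδ : |x| < δ := abs_lt.2 ⟨hxS.1, hxS.2⟩
        have hb := hbd₁ ε hε.1 hε.2 x hxδ
        calc ‖(Gp ε x - Gp ε 0) * ((x:ℂ) + ε * I)⁻¹
              - (Gm ε x - Gm ε 0) * ((x:ℂ) - ε * I)⁻¹‖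
            ≤ ‖(Gp ε x - Gp ε 0) * ((x:ℂ) + ε * I)⁻¹‖
              + ‖(Gm ε x - Gm ε 0) * ((x:ℂ) - ε * I)⁻¹‖ := norm_sub_le _ _
          _ ≤ h₁ x + h₁ x := add_le_add
              (by simpa [div_eq_mul_inv] using hb.1)
              (by simpa [div_eq_mul_inv] using hb.2)
      · filter_upwards [ae_restrict_of_ae hae, ae_restrict_of_ae hx0ae] with x hx hx0
        have hxc : ((x:ℂ)) ≠ 0 := Complex.ofReal_ne_zero.2 hx0
        have hdp : Tendsto (fun ε : ℝ => (x:ℂ) + ε * I) (𝓝[>] (0:ℝ)) (𝓝 (x:ℂ)) :=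
          (auxDp x).mono_left nhdsWithin_le_nhds
        have hdm : Tendsto (fun ε : ℝ => (x:ℂ) - ε * I) (𝓝[>] (0:ℝ)) (𝓝 (x:ℂ)) :=
          (auxDm x).mono_left nhdsWithin_le_nhds
        have t1 := ((hx.1.sub h0p).div hdp hxc)
        have t2 := ((hx.2.sub h0m).div hdm hxc)
        have := t1.sub t2
        simp only [div_eq_mul_inv] at this
        rw [show ((G0p x - G0p 0) - (G0m x - G0m 0)) / (x:ℂ)
          = (G0p x - G0p 0) * ((x:ℂ))⁻¹ - (G0m x - G0m 0) * ((x:ℂ))⁻¹ by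
            simp only [div_eq_mul_inv]; ring]
        exact this
    -- DCT on T
    have hTT : Tendsto (fun ε : ℝ => ∫ x in T,
        (Gp ε x * ((x:ℂ) + ε * I)⁻¹ - Gm ε x * ((x:ℂ) - ε * I)⁻¹))
        (𝓝[>] (0:ℝ)) (𝓝 B) := by
      refine tendsto_integral_filter_of_dominated_convergence
        (fun x => h₂ x + h₂ x) ?_ ?_ (hInt₂.add hInt₂) ?_
      · filter_upwards [hIoo] with ε hε
        exact (Measurable.aestronglyMeasurable
          (((hmeas ε hε.1).1.mul (hmx.add_const _).inv).sub
            ((hmeas ε hε.1).2.mul (hmx.sub_const _).inv))).restrict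
      · filter_upwards [hIoo] with ε hε
        filter_upwards [ae_restrict_mem hT] with x hxT
        have hxδ : δ < |x| := hxT
        have hb := hbd₂ ε hε.1 hε.2 x hxδ
        calc ‖Gp ε x * ((x:ℂ) + ε * I)⁻¹ - Gm ε x * ((x:ℂ) - ε * I)⁻¹‖
            ≤ ‖Gp ε x * ((x:ℂ) + ε * I)⁻¹‖ + ‖Gm ε x * ((x:ℂ) - ε * I)⁻¹‖ := norm_sub_le _ _
          _ ≤ h₂ x + h₂ x := add_le_add
              (by simpa [div_eq_mul_inv] using hb.1)
              (by simpa [div_eq_mul_inv] using hb.2)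
      · filter_upwards [ae_restrict_of_ae hae, ae_restrict_of_ae hx0ae] with x hx hx0
        have hxc : ((x:ℂ)) ≠ 0 := Complex.ofReal_ne_zero.2 hx0
        have hdp : Tendsto (fun ε : ℝ => (x:ℂ) + ε * I) (𝓝[>] (0:ℝ)) (𝓝 (x:ℂ)) :=
          (auxDp x).mono_left nhdsWithin_le_nhds
        have hdm : Tendsto (fun ε : ℝ => (x:ℂ) - ε * I) (𝓝[>] (0:ℝ)) (𝓝 (x:ℂ)) :=
          (auxDm x).mono_left nhdsWithin_le_nhds
        have t1 := (hx.1.div hdp hxc)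
        have t2 := (hx.2.div hdm hxc)
        have := t1.sub t2
        simp only [div_eq_mul_inv] at this
        rw [show (G0p x - G0m x) / (x:ℂ)
          = G0p x * ((x:ℂ))⁻¹ - G0m x * ((x:ℂ))⁻¹ by
            simp only [div_eq_mul_inv]; ring]
        exact this
    -- arctan limit
    have harc : Tendsto (fun ε : ℝ => (((2 * Real.arctan (δ / ε) : ℝ)) : ℂ))
        (𝓝[>] (0:ℝ)) (𝓝 ((Real.pi : ℂ))) := by
      have h2 : Tendsto (fun ε : ℝ => 2 * Real.arctan (δ / ε)) (𝓝[>] (0:ℝ))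
          (𝓝 (2 * (Real.pi / 2))) := (auxArctan δ hδ).const_mul 2
      have h3 : 2 * (Real.pi / 2) = Real.pi := by ring
      rw [h3] at h2
      exact (Complex.continuous_ofReal.tendsto _).comp h2
    have hC : Tendsto (fun ε : ℝ =>
        Gp ε 0 * (-(((2 * Real.arctan (δ / ε) : ℝ)) : ℂ) * I)
          - Gm ε 0 * ((((2 * Real.arctan (δ / ε) : ℝ)) : ℂ) * I))
        (𝓝[>] (0:ℝ))
        (𝓝 (G0p 0 * (-(Real.pi:ℂ) * I) - G0m 0 * ((Real.pi:ℂ) * I))) :=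
      (h0p.mul ((harc.neg).mul_const I)).sub (h0m.mul (harc.mul_const I))
    have hsum := (hTS.add hTT).add hC
    -- eventual equality
    have key2 : ∀ᶠ ε in 𝓝[>] (0:ℝ),
        ((∫ x in S, ((Gp ε x - Gp ε 0) * ((x:ℂ) + ε * I)⁻¹
            - (Gm ε x - Gm ε 0) * ((x:ℂ) - ε * I)⁻¹))
          + (∫ x in T, (Gp ε x * ((x:ℂ) + ε * I)⁻¹ - Gm ε x * ((x:ℂ) - ε * I)⁻¹)))
          + (Gp ε 0 * (-(((2 * Real.arctan (δ / ε) : ℝ)) : ℂ) * I)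
            - Gm ε 0 * ((((2 * Real.arctan (δ / ε) : ℝ)) : ℂ) * I))
        = ∫ x : ℝ, (Gp ε x * ((x:ℂ) + ε * I)⁻¹ - Gm ε x * ((x:ℂ) - ε * I)⁻¹) := by
      filter_upwards [hIoo] with ε hε
      obtain ⟨hε1, hε2⟩ := hε
      have hΦeq : (fun x : ℝ => Gp ε x * ((x:ℂ) + ε * I)⁻¹ - Gm ε x * ((x:ℂ) - ε * I)⁻¹)
          = fun x : ℝ => ((Gp ε x - Gp ε 0) * ((x:ℂ) + ε * I)⁻¹
              - (Gm ε x - Gm ε 0) * ((x:ℂ) - ε * I)⁻¹)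
            + (Gp ε 0 * ((x:ℂ) + ε * I)⁻¹ - Gm ε 0 * ((x:ℂ) - ε * I)⁻¹) :=
        funext fun x => by ring
      have hintgS : IntegrableOn (fun x : ℝ => (Gp ε x - Gp ε 0) * ((x:ℂ) + ε * I)⁻¹
          - (Gm ε x - Gm ε 0) * ((x:ℂ) - ε * I)⁻¹) S := by
        refine Integrable.mono' (hInt₁.add hInt₁) (Measurable.aestronglyMeasurable
          ((((hmeas ε hε1).1.sub measurable_const).mul (hmx.add_const _).inv).sub
            (((hmeas ε hε1).2.sub measurable_const).mul (hmx.sub_const _).inv))).restrict ?_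
        filter_upwards [ae_restrict_mem hS] with x hxS
        have hxδ : |x| < δ := abs_lt.2 ⟨hxS.1, hxS.2⟩
        have hb := hbd₁ ε hε1 hε2 x hxδ
        calc ‖(Gp ε x - Gp ε 0) * ((x:ℂ) + ε * I)⁻¹
              - (Gm ε x - Gm ε 0) * ((x:ℂ) - ε * I)⁻¹‖
            ≤ ‖(Gp ε x - Gp ε 0) * ((x:ℂ) + ε * I)⁻¹‖
              + ‖(Gm ε x - Gm ε 0) * ((x:ℂ) - ε * I)⁻¹‖ := norm_sub_le _ _
          _ ≤ h₁ x + h₁ x := add_le_add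
              (by simpa [div_eq_mul_inv] using hb.1)
              (by simpa [div_eq_mul_inv] using hb.2)
      have hintp : IntegrableOn (fun x : ℝ => ((x:ℂ) + ε * I)⁻¹) S :=
        ((auxcontp ε hε1).integrableOn_Icc).mono_set Ioo_subset_Icc_self
      have hintm : IntegrableOn (fun x : ℝ => ((x:ℂ) - ε * I)⁻¹) S :=
        ((auxcontm ε hε1).integrableOn_Icc).mono_set Ioo_subset_Icc_self
      have hintkS : IntegrableOn (fun x : ℝ =>
          Gp ε 0 * ((x:ℂ) + ε * I)⁻¹ - Gm ε 0 * ((x:ℂ) - ε * I)⁻¹) S :=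
        (hintp.const_mul _).sub (hintm.const_mul _)
      have hintΦS : IntegrableOn (fun x : ℝ =>
          Gp ε x * ((x:ℂ) + ε * I)⁻¹ - Gm ε x * ((x:ℂ) - ε * I)⁻¹) S := by
        rw [hΦeq]
        exact hintgS.add hintkS
      have hintΦT : IntegrableOn (fun x : ℝ =>
          Gp ε x * ((x:ℂ) + ε * I)⁻¹ - Gm ε x * ((x:ℂ) - ε * I)⁻¹) T := by
        refine Integrable.mono' (hInt₂.add hInt₂) (Measurable.aestronglyMeasurable
          (((hmeas ε hε1).1.mul (hmx.add_const _).inv).sub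
            ((hmeas ε hε1).2.mul (hmx.sub_const _).inv))).restrict ?_
        filter_upwards [ae_restrict_mem hT] with x hxT
        have hb := hbd₂ ε hε1 hε2 x hxT
        calc ‖Gp ε x * ((x:ℂ) + ε * I)⁻¹ - Gm ε x * ((x:ℂ) - ε * I)⁻¹‖
            ≤ ‖Gp ε x * ((x:ℂ) + ε * I)⁻¹‖ + ‖Gm ε x * ((x:ℂ) - ε * I)⁻¹‖ := norm_sub_le _ _
          _ ≤ h₂ x + h₂ x := add_le_add
              (by simpa [div_eq_mul_inv] using hb.1)
              (by simpa [div_eq_mul_inv] using hb.2)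
      have hintΦc : IntegrableOn (fun x : ℝ =>
          Gp ε x * ((x:ℂ) + ε * I)⁻¹ - Gm ε x * ((x:ℂ) - ε * I)⁻¹) Sᶜ :=
        hintΦT.congr_set_ae hScT
      have hintΦ : Integrable (fun x : ℝ =>
          Gp ε x * ((x:ℂ) + ε * I)⁻¹ - Gm ε x * ((x:ℂ) - ε * I)⁻¹) := by
        have h4 := hintΦS.union hintΦc
        rwa [union_compl_self, integrableOn_univ] at h4
      have e5 : (∫ x in Sᶜ, (Gp ε x * ((x:ℂ) + ε * I)⁻¹ - Gm ε x * ((x:ℂ) - ε * I)⁻¹))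
          = ∫ x in T, (Gp ε x * ((x:ℂ) + ε * I)⁻¹ - Gm ε x * ((x:ℂ) - ε * I)⁻¹) :=
        setIntegral_congr_set hScT
      have e6 : (∫ x in S, (Gp ε x * ((x:ℂ) + ε * I)⁻¹ - Gm ε x * ((x:ℂ) - ε * I)⁻¹))
          = (∫ x in S, ((Gp ε x - Gp ε 0) * ((x:ℂ) + ε * I)⁻¹
              - (Gm ε x - Gm ε 0) * ((x:ℂ) - ε * I)⁻¹))
            + (Gp ε 0 * (-(((2 * Real.arctan (δ / ε) : ℝ)) : ℂ) * I)
              - Gm ε 0 * ((((2 * Real.arctan (δ / ε) : ℝ)) : ℂ) * I)) := by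
        rw [hΦeq, integral_add hintgS hintkS]
        congr 1
        rw [integral_sub (hintp.const_mul _) (hintm.const_mul _),
          integral_const_mul, integral_const_mul]
        rw [show S = Ioo (-δ) δ from hSdef, auxJp δ ε hδ.le hε1, auxJm δ ε hδ.le hε1]
      rw [← integral_add_compl hS hintΦ, e5, e6]
      ring
    -- conclusion
    have key2' : ∀ᶠ ε in 𝓝[>] (0:ℝ),
        (-1 / (2 * (Real.pi:ℂ) * I)) *
          (((∫ x in S, ((Gp ε x - Gp ε 0) * ((x:ℂ) + ε * I)⁻¹
              - (Gm ε x - Gm ε 0) * ((x:ℂ) - ε * I)⁻¹))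
            + (∫ x in T, (Gp ε x * ((x:ℂ) + ε * I)⁻¹ - Gm ε x * ((x:ℂ) - ε * I)⁻¹)))
            + (Gp ε 0 * (-(((2 * Real.arctan (δ / ε) : ℝ)) : ℂ) * I)
              - Gm ε 0 * ((((2 * Real.arctan (δ / ε) : ℝ)) : ℂ) * I)))
        = (-1 / (2 * (Real.pi:ℂ) * I)) *
            ∫ x : ℝ, (Gp ε x * ((x:ℂ) + ε * I)⁻¹ - Gm ε x * ((x:ℂ) - ε * I)⁻¹) :=
      key2.mono fun ε h => by rw [h]
    have hfinal := Tendsto.congr' key2' (hsum.const_mul (-1 / (2 * (Real.pi:ℂ) * I)))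
    have hval := auxFinal A B (G0p 0) (G0m 0)
    rw [hval] at hfinal
    exact hfinal
end
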